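/- For every (x, y) ∈ [0,1]², (C₂ ▵_φ C₁)(x, y) = sup{C(x, y) : C is a copula with C(t, φ(t)) = Γ(t) for all t ∈ [0,1]}; that is, the φ-splice of C₁ and C₂ is the pointwise supremum of the set of all copulas with curvilinear section Γ. -/

import Mathlib

/-!
Upper bound: let `C` be a copula with section `Γ` along `φ` and `y ≤ φ x`. By the Lipschitz
property and 2-increasingness of `C`, both `t ↦ C(x, φ t)` and `Γ̂ + C(x, φ ·)` are nondecreasing
on `[φ⁻¹ y, x]`, so there `Γ̂` is a difference of nondecreasing functions and its variation is at
most the sum of their increments; since `C(x, φ x) = Γ x`, this rearranges to `C(x, y) ≤ f₁(x, y)`.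
The case `y ≥ φ x` is the same argument with `t ↦ C(t, y)` and `Γ̃`.

Attainment: with `P`, `N` the positive and negative variations of `Γ̂` from `0`, the variables
separate, `f₁(x, y) = (x - P x) + N (φ⁻¹ y)`. Minimality of the Jordan decomposition, applied to
`Γ̂ = id - Γ` and to `Γ̂ = (id + φ - Γ) - φ`, shows that `x ↦ x - P x` and `y ↦ N (φ⁻¹ y)` are
nondecreasing and 1-Lipschitz, and for such `A`, `B` (with `A 0 = B 0 = 0`, `A 1 + B 1 ≥ 1`)
`min(x, y, A x + B y)` is a copula. Hence `C₁` is a copula with section `Γ`, and likewise `C₂`.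
-/

open Set MeasureTheory

/-- `Γ̂(t) = t - Γ(t)`. -/
def Ghat (Γ : ℝ → ℝ) : ℝ → ℝ := fun t => t - Γ t

/-- `Γ̃(t) = φ(t) - Γ(t)`. -/
def Gtil (φ Γ : ℝ → ℝ) : ℝ → ℝ := fun t => φ t - Γ t

/-- The (signed) total variation `V_a^b(f)` of `f` on `[a, b] ⊆ [0, 1]`, with
the conventions `V_b^a(f) = -V_a^b(f)` and `V_a^a(f) = 0`. -/
noncomputable def sV (f : ℝ → ℝ) (a b : ℝ) : ℝ := variationOnFromTo f (Set.Icc 0 1) a b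

/-- `f₁(x, y) = x - (1/2) (V_{φ⁻¹(y)}^x(Γ̂) + Γ̂(x) + Γ̂(φ⁻¹(y)))`, where `ψ = φ⁻¹`. -/
noncomputable def f1 (ψ Γ : ℝ → ℝ) (x y : ℝ) : ℝ :=
  x - (1/2) * (sV (Ghat Γ) (ψ y) x + Ghat Γ x + Ghat Γ (ψ y))

/-- `f₂(x, y) = y - (1/2) (V_x^{φ⁻¹(y)}(Γ̃) + Γ̃(x) + Γ̃(φ⁻¹(y)))`, where `ψ = φ⁻¹`. -/
noncomputable def f2 (φ ψ Γ : ℝ → ℝ) (x y : ℝ) : ℝ :=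
  y - (1/2) * (sV (Gtil φ Γ) x (ψ y) + Gtil φ Γ x + Gtil φ Γ (ψ y))

/-- `C₁(x, y) = min {x, y, f₁(x, y)}`. -/
noncomputable def C1 (ψ Γ : ℝ → ℝ) (x y : ℝ) : ℝ := min x (min y (f1 ψ Γ x y))

/-- `C₂(x, y) = min {x, y, f₂(x, y)}`. -/
noncomputable def C2 (φ ψ Γ : ℝ → ℝ) (x y : ℝ) : ℝ := min x (min y (f2 φ ψ Γ x y))

/-- The φ-splice `C₂ ▵_φ C₁`: equal to `C₁` when `y ≤ φ(x)`, to `C₂` when `y ≥ φ(x)`. -/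
noncomputable def splice (φ ψ Γ : ℝ → ℝ) (x y : ℝ) : ℝ :=
  if y ≤ φ x then C1 ψ Γ x y else C2 φ ψ Γ x y

/-- A copula on `[0,1]²`: boundary conditions and 2-increasingness. -/
def IsCopula (C : ℝ → ℝ → ℝ) : Prop :=
  (∀ x ∈ Set.Icc (0:ℝ) 1, ∀ y ∈ Set.Icc (0:ℝ) 1, C x y ∈ Set.Icc (0:ℝ) 1) ∧
  (∀ x ∈ Set.Icc (0:ℝ) 1, C x 0 = 0 ∧ C 0 x = 0 ∧ C x 1 = x ∧ C 1 x = x) ∧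
  (∀ x₁ x₂ y₁ y₂ : ℝ, x₁ ∈ Set.Icc (0:ℝ) 1 → x₂ ∈ Set.Icc (0:ℝ) 1 →
    y₁ ∈ Set.Icc (0:ℝ) 1 → y₂ ∈ Set.Icc (0:ℝ) 1 → x₁ ≤ x₂ → y₁ ≤ y₂ →
    0 ≤ C x₂ y₂ - C x₂ y₁ - C x₁ y₂ + C x₁ y₁)

/-- The greatest quasi-copula `A_Γ` with curvilinear section `Γ` (`ψ = φ⁻¹`). -/
noncomputable def AG (φ ψ Γ : ℝ → ℝ) (x y : ℝ) : ℝ :=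
  if y ≤ φ x then min y (x - sSup (Ghat Γ '' Set.Icc (ψ y) x))
  else min x (y - sSup (Gtil φ Γ '' Set.Icc x (ψ y)))

section Variation

variable {α : Type*} [LinearOrder α]

theorem eVariationOn_sub_le {E : Type*} [SeminormedAddCommGroup E] (f g : α → E) (s : Set α) :
    eVariationOn (f - g) s ≤ eVariationOn f s + eVariationOn g s := by
  refine iSup_le fun ⟨n, u, hu, us⟩ => ?_
  calc ∑ i ∈ Finset.range n, edist ((f - g) (u (i + 1))) ((f - g) (u i))
      ≤ ∑ i ∈ Finset.range n,
          (edist (f (u (i + 1))) (f (u i)) + edist (g (u (i + 1))) (g (u i))) := by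
        refine Finset.sum_le_sum fun i _ => ?_
        simp only [Pi.sub_apply, sub_eq_add_neg]
        grw [edist_add_add_le, edist_neg_neg]
    _ ≤ eVariationOn f s + eVariationOn g s := by
        rw [Finset.sum_add_distrib]
        exact add_le_add (eVariationOn.sum_le (f := f) hu us) (eVariationOn.sum_le (f := g) hu us)

variable {f h g : α → ℝ} {s : Set α} {a b : α}

theorem eVariationOn_sub_le_of_monotoneOn (hh : MonotoneOn h s) (hg : MonotoneOn g s)
    (as : a ∈ s) (bs : b ∈ s) :
    eVariationOn (h - g) (s ∩ Icc a b) ≤ .ofReal (h b - h a) + .ofReal (g b - g a) := by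
  rw [← hh.eVariationOn_eq as bs, ← hg.eVariationOn_eq as bs]
  exact eVariationOn_sub_le h g _

theorem MonotoneOn.locallyBoundedVariationOn_sub (hh : MonotoneOn h s) (hg : MonotoneOn g s) :
    LocallyBoundedVariationOn (h - g) s := fun _ _ as bs =>
  ne_top_of_le_ne_top (by simp) (eVariationOn_sub_le_of_monotoneOn hh hg as bs)

theorem variationOnFromTo_sub_le (hh : MonotoneOn h (s ∩ Icc a b))
    (hg : MonotoneOn g (s ∩ Icc a b)) (as : a ∈ s) (bs : b ∈ s) (hab : a ≤ b) :
    variationOnFromTo (h - g) s a b ≤ (h b - h a) + (g b - g a) := by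
  have ha : a ∈ s ∩ Icc a b := ⟨as, le_rfl, hab⟩
  have hb : b ∈ s ∩ Icc a b := ⟨bs, hab, le_rfl⟩
  have hh' := sub_nonneg.2 (hh ha hb hab)
  have hg' := sub_nonneg.2 (hg ha hb hab)
  have hV := eVariationOn_sub_le_of_monotoneOn hh hg ha hb
  rw [inter_assoc, inter_self, ← ENNReal.ofReal_add hh' hg'] at hV
  rw [variationOnFromTo.eq_of_le _ _ hab]
  exact ENNReal.toReal_le_of_le_ofReal (add_nonneg hh' hg') hV

noncomputable def posVar (f : α → ℝ) (s : Set α) (a t : α) : ℝ :=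
  (variationOnFromTo f s a t + f t) / 2

noncomputable def negVar (f : α → ℝ) (s : Set α) (a t : α) : ℝ :=
  (variationOnFromTo f s a t - f t) / 2

theorem LocallyBoundedVariationOn.monotoneOn_posVar (hf : LocallyBoundedVariationOn f s)
    (as : a ∈ s) : MonotoneOn (posVar f s a) s := fun _ bs _ cs hbc =>
  div_le_div_of_nonneg_right (variationOnFromTo.add_self_monotoneOn hf as bs cs hbc) two_pos.le

theorem LocallyBoundedVariationOn.monotoneOn_negVar (hf : LocallyBoundedVariationOn f s)
    (as : a ∈ s) : MonotoneOn (negVar f s a) s := fun _ bs _ cs hbc =>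
  div_le_div_of_nonneg_right (variationOnFromTo.sub_self_monotoneOn hf as bs cs hbc) two_pos.le

/- Minimality of the Jordan decomposition: for any splitting `f = h - g` into monotone functions,
the increments of `posVar f` and `negVar f` are bounded by those of `h` and `g`. -/
theorem MonotoneOn.monotoneOn_sub_posVar (hh : MonotoneOn h s) (hg : MonotoneOn g s)
    (as : a ∈ s) : MonotoneOn (h - posVar (h - g) s a) s := by
  intro b bs c cs hbc
  have hV := variationOnFromTo_sub_le (hh.mono inter_subset_left) (hg.mono inter_subset_left)
    bs cs hbc
  have hadd := variationOnFromTo.add (hh.locallyBoundedVariationOn_sub hg) as bs cs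
  simp only [Pi.sub_apply, posVar] at *
  linarith

theorem MonotoneOn.monotoneOn_sub_negVar (hh : MonotoneOn h s) (hg : MonotoneOn g s)
    (as : a ∈ s) : MonotoneOn (g - negVar (h - g) s a) s := by
  intro b bs c cs hbc
  have hV := variationOnFromTo_sub_le (hh.mono inter_subset_left) (hg.mono inter_subset_left)
    bs cs hbc
  have hadd := variationOnFromTo.add (hh.locallyBoundedVariationOn_sub hg) as bs cs
  simp only [Pi.sub_apply, negVar] at *
  linarith

end Variation

theorem StrictMonoOn.monotoneOn_of_rightInvOn {α β : Type*} [LinearOrder α] [LinearOrder β]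
    {φ : α → β} {ψ : β → α} {s : Set α} {t : Set β} (hφ : StrictMonoOn φ s) (hψ : MapsTo ψ t s)
    (hφψ : ∀ y ∈ t, φ (ψ y) = y) : MonotoneOn ψ t := fun a ha b hb hab =>
  (hφ.le_iff_le (hψ ha) (hψ hb)).1 (by rwa [hφψ a ha, hφψ b hb])

local notation "𝕀" => Icc (0 : ℝ) 1

namespace IsCopula

variable {C : ℝ → ℝ → ℝ} {x y x₁ x₂ y₁ y₂ : ℝ}

theorem mono_left (hC : IsCopula C) (hx₁ : x₁ ∈ 𝕀) (hx₂ : x₂ ∈ 𝕀) (hy : y ∈ 𝕀) (h : x₁ ≤ x₂) :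
    C x₁ y ≤ C x₂ y := by
  have := hC.2.2 x₁ x₂ 0 y hx₁ hx₂ unitInterval.zero_mem hy h hy.1
  linarith [(hC.2.1 x₁ hx₁).1, (hC.2.1 x₂ hx₂).1]

theorem mono_right (hC : IsCopula C) (hx : x ∈ 𝕀) (hy₁ : y₁ ∈ 𝕀) (hy₂ : y₂ ∈ 𝕀) (h : y₁ ≤ y₂) :
    C x y₁ ≤ C x y₂ := by
  have := hC.2.2 0 x y₁ y₂ unitInterval.zero_mem hx hy₁ hy₂ hx.1 h
  linarith [(hC.2.1 y₁ hy₁).2.1, (hC.2.1 y₂ hy₂).2.1]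

theorem sub_le_sub_left (hC : IsCopula C) (hx₁ : x₁ ∈ 𝕀) (hx₂ : x₂ ∈ 𝕀) (hy : y ∈ 𝕀)
    (h : x₁ ≤ x₂) : C x₂ y - C x₁ y ≤ x₂ - x₁ := by
  have := hC.2.2 x₁ x₂ y 1 hx₁ hx₂ hy unitInterval.one_mem h hy.2
  linarith [(hC.2.1 x₁ hx₁).2.2.1, (hC.2.1 x₂ hx₂).2.2.1]

theorem sub_le_sub_right (hC : IsCopula C) (hx : x ∈ 𝕀) (hy₁ : y₁ ∈ 𝕀) (hy₂ : y₂ ∈ 𝕀)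
    (h : y₁ ≤ y₂) : C x y₂ - C x y₁ ≤ y₂ - y₁ := by
  have := hC.2.2 x 1 y₁ y₂ hx unitInterval.one_mem hy₁ hy₂ hx.2 h
  linarith [(hC.2.1 y₁ hy₁).2.2.2, (hC.2.1 y₂ hy₂).2.2.2]

theorem le_left (hC : IsCopula C) (hx : x ∈ 𝕀) (hy : y ∈ 𝕀) : C x y ≤ x :=
  (hC.mono_right hx hy unitInterval.one_mem hy.2).trans_eq (hC.2.1 x hx).2.2.1

theorem le_right (hC : IsCopula C) (hx : x ∈ 𝕀) (hy : y ∈ 𝕀) : C x y ≤ y :=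
  (hC.mono_left hx unitInterval.one_mem hy hx.2).trans_eq (hC.2.1 y hy).2.2.2

theorem sub_le_add_sub_left (hC : IsCopula C) (hx₁ : x₁ ∈ 𝕀) (hx₂ : x₂ ∈ 𝕀) (hx : x ∈ 𝕀)
    (hy₁ : y₁ ∈ 𝕀) (hy₂ : y₂ ∈ 𝕀) (h₁₂ : x₁ ≤ x₂) (h₂ : x₂ ≤ x) (hy : y₁ ≤ y₂) :
    C x₂ y₂ - C x₁ y₁ ≤ (x₂ - x₁) + (C x y₂ - C x y₁) := by
  have := hC.2.2 x₂ x y₁ y₂ hx₂ hx hy₁ hy₂ h₂ hy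
  linarith [hC.sub_le_sub_left hx₁ hx₂ hy₁ h₁₂]

theorem sub_le_add_sub_right (hC : IsCopula C) (hx₁ : x₁ ∈ 𝕀) (hx₂ : x₂ ∈ 𝕀) (hy₁ : y₁ ∈ 𝕀)
    (hy₂ : y₂ ∈ 𝕀) (hy : y ∈ 𝕀) (hx : x₁ ≤ x₂) (h₁₂ : y₁ ≤ y₂) (h₂ : y₂ ≤ y) :
    C x₂ y₂ - C x₁ y₁ ≤ (y₂ - y₁) + (C x₂ y - C x₁ y) := by
  have := hC.2.2 x₁ x₂ y₂ y hx₁ hx₂ hy₂ hy hx h₂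
  linarith [hC.sub_le_sub_right hx₁ hy₁ hy₂ h₁₂]

end IsCopula

theorem isCopula_min_min_add {A B : ℝ → ℝ} {F : ℝ → ℝ → ℝ}
    (hA : MonotoneOn A 𝕀) (hA' : MonotoneOn (fun t => t - A t) 𝕀)
    (hB : MonotoneOn B 𝕀) (hB' : MonotoneOn (fun t => t - B t) 𝕀)
    (hA0 : A 0 = 0) (hB0 : B 0 = 0) (hAB1 : 1 ≤ A 1 + B 1)
    (hF : ∀ x ∈ 𝕀, ∀ y ∈ 𝕀, F x y = A x + B y) :
    IsCopula fun x y => min x (min y (F x y)) := by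
  have h0 := unitInterval.zero_mem
  have h1 := unitInterval.one_mem
  have hA_nonneg : ∀ x ∈ 𝕀, 0 ≤ A x := fun x hx => hA0 ▸ hA h0 hx hx.1
  have hB_nonneg : ∀ y ∈ 𝕀, 0 ≤ B y := fun y hy => hB0 ▸ hB h0 hy hy.1
  have hA_one : ∀ x ∈ 𝕀, x ≤ A x + B 1 := fun x hx => by
    have := hA' hx h1 hx.2; dsimp only at this; linarith
  have hB_one : ∀ y ∈ 𝕀, y ≤ A 1 + B y := fun y hy => by
    have := hB' hy h1 hy.2; dsimp only at this; linarith
  refine ⟨fun x hx y hy => ?_, fun x hx => ?_, fun x₁ x₂ y₁ y₂ hx₁ hx₂ hy₁ hy₂ hx hy => ?_⟩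
  · dsimp only
    rw [hF x hx y hy]
    exact ⟨le_min hx.1 (le_min hy.1 (add_nonneg (hA_nonneg x hx) (hB_nonneg y hy))),
      (min_le_left _ _).trans hx.2⟩
  · simp only [hF x hx 0 h0, hF 0 h0 x hx, hF x hx 1 h1, hF 1 h1 x hx, hA0, hB0]
    have := hA_nonneg x hx
    have := hB_nonneg x hx
    have := hA_one x hx
    have := hB_one x hx
    refine ⟨?_, ?_, ?_, ?_⟩ <;> grind
  · simp only [hF x₁ hx₁ y₁ hy₁, hF x₁ hx₁ y₂ hy₂, hF x₂ hx₂ y₁ hy₁, hF x₂ hx₂ y₂ hy₂]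
    have := hA hx₁ hx₂ hx
    have := hA' hx₁ hx₂ hx
    have := hB hy₁ hy₂ hy
    have := hB' hy₁ hy₂ hy
    dsimp only at *
    have u₁ : min x₁ (min y₂ (A x₁ + B y₂)) ≤ x₁ := min_le_left _ _
    have u₂ : min x₁ (min y₂ (A x₁ + B y₂)) ≤ y₂ := (min_le_right _ _).trans (min_le_left _ _)
    have u₃ : min x₁ (min y₂ (A x₁ + B y₂)) ≤ A x₁ + B y₂ :=
      (min_le_right _ _).trans (min_le_right _ _)
    have v₁ : min x₂ (min y₁ (A x₂ + B y₁)) ≤ x₂ := min_le_left _ _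
    have v₂ : min x₂ (min y₁ (A x₂ + B y₁)) ≤ y₁ := (min_le_right _ _).trans (min_le_left _ _)
    have v₃ : min x₂ (min y₁ (A x₂ + B y₁)) ≤ A x₂ + B y₁ :=
      (min_le_right _ _).trans (min_le_right _ _)
    rcases min_cases x₂ (min y₂ (A x₂ + B y₂)) with ⟨e₂, _⟩ | ⟨e₂, _⟩ <;>
      rcases min_cases y₂ (A x₂ + B y₂) with ⟨e₂', _⟩ | ⟨e₂', _⟩ <;>
        rcases min_cases x₁ (min y₁ (A x₁ + B y₁)) with ⟨e₁, _⟩ | ⟨e₁, _⟩ <;>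
          rcases min_cases y₁ (A x₁ + B y₁) with ⟨e₁', _⟩ | ⟨e₁', _⟩ <;>
            linarith

section CurvilinearSection

variable {φ ψ Γ : ℝ → ℝ} {x y : ℝ}

theorem Ghat_eq_sub_phi : Ghat Γ = (fun t => t + φ t - Γ t) - φ := by
  funext t; simp only [Ghat, Pi.sub_apply]; ring

theorem Gtil_eq_sub_id : Gtil φ Γ = (fun t => t + φ t - Γ t) - id := by
  funext t; simp only [Gtil, Pi.sub_apply, id]; ring

theorem f1_eq (hΓ : MonotoneOn Γ 𝕀) (hψ : MapsTo ψ 𝕀 𝕀) (hx : x ∈ 𝕀) (hy : y ∈ 𝕀) :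
    f1 ψ Γ x y = (x - posVar (Ghat Γ) 𝕀 0 x) + negVar (Ghat Γ) 𝕀 0 (ψ y) := by
  have hG : LocallyBoundedVariationOn (Ghat Γ) 𝕀 := monotoneOn_id.locallyBoundedVariationOn_sub hΓ
  have hadd := variationOnFromTo.add hG unitInterval.zero_mem (hψ hy) hx
  simp only [f1, sV, posVar, negVar]
  linarith

theorem f2_eq (hφ : MonotoneOn φ 𝕀) (hΓ : MonotoneOn Γ 𝕀) (hψ : MapsTo ψ 𝕀 𝕀)
    (hx : x ∈ 𝕀) (hy : y ∈ 𝕀) :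
    f2 φ ψ Γ x y = negVar (Gtil φ Γ) 𝕀 0 x + (y - posVar (Gtil φ Γ) 𝕀 0 (ψ y)) := by
  have hG : LocallyBoundedVariationOn (Gtil φ Γ) 𝕀 := hφ.locallyBoundedVariationOn_sub hΓ
  have hadd := variationOnFromTo.add hG unitInterval.zero_mem hx (hψ hy)
  simp only [f2, sV, posVar, negVar]
  linarith

theorem isCopula_C1 (hφ : MonotoneOn φ 𝕀) (hΓ : MonotoneOn Γ 𝕀)
    (hσ : MonotoneOn (fun t => t + φ t - Γ t) 𝕀) (hψ : MonotoneOn ψ 𝕀) (hψI : MapsTo ψ 𝕀 𝕀)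
    (hφψ : ∀ y ∈ 𝕀, φ (ψ y) = y) (hΓ0 : Γ 0 = 0) (hΓ1 : Γ 1 = 1) (hψ0 : ψ 0 = 0)
    (hψ1 : ψ 1 = 1) : IsCopula (C1 ψ Γ) := by
  have h0 := unitInterval.zero_mem
  have hG : LocallyBoundedVariationOn (Ghat Γ) 𝕀 := monotoneOn_id.locallyBoundedVariationOn_sub hΓ
  have hφN : MonotoneOn (φ - negVar (Ghat Γ) 𝕀 0) 𝕀 := by
    rw [Ghat_eq_sub_phi]; exact hσ.monotoneOn_sub_negVar hφ h0
  refine isCopula_min_min_add (A := fun x => x - posVar (Ghat Γ) 𝕀 0 x)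
    (B := negVar (Ghat Γ) 𝕀 0 ∘ ψ) (monotoneOn_id.monotoneOn_sub_posVar hΓ h0) ?_
    ((hG.monotoneOn_negVar h0).comp hψ hψI) ((hφN.comp hψ hψI).congr fun y hy => ?_) ?_ ?_ ?_
    fun x hx y hy => f1_eq hΓ hψI hx hy
  · simpa only [sub_sub_cancel] using hG.monotoneOn_posVar h0
  · simp [hφψ y hy]
  · simp [posVar, variationOnFromTo.self, Ghat, hΓ0]
  · simp [negVar, variationOnFromTo.self, Ghat, hΓ0, hψ0]
  · simp [posVar, negVar, Ghat, hΓ1, hψ1]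

theorem isCopula_C2 (hφ : MonotoneOn φ 𝕀) (hΓ : MonotoneOn Γ 𝕀)
    (hσ : MonotoneOn (fun t => t + φ t - Γ t) 𝕀) (hψ : MonotoneOn ψ 𝕀) (hψI : MapsTo ψ 𝕀 𝕀)
    (hφψ : ∀ y ∈ 𝕀, φ (ψ y) = y) (hφ0 : φ 0 = 0) (hφ1 : φ 1 = 1) (hΓ0 : Γ 0 = 0)
    (hΓ1 : Γ 1 = 1) (hψ0 : ψ 0 = 0) (hψ1 : ψ 1 = 1) : IsCopula (C2 φ ψ Γ) := by
  have h0 := unitInterval.zero_mem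
  have hG : LocallyBoundedVariationOn (Gtil φ Γ) 𝕀 := hφ.locallyBoundedVariationOn_sub hΓ
  have hidN : MonotoneOn (id - negVar (Gtil φ Γ) 𝕀 0) 𝕀 := by
    rw [Gtil_eq_sub_id]; exact hσ.monotoneOn_sub_negVar monotoneOn_id h0
  have hφP : MonotoneOn (φ - posVar (Gtil φ Γ) 𝕀 0) 𝕀 := hφ.monotoneOn_sub_posVar hΓ h0
  refine isCopula_min_min_add (A := negVar (Gtil φ Γ) 𝕀 0)
    (B := fun y => y - posVar (Gtil φ Γ) 𝕀 0 (ψ y)) (hG.monotoneOn_negVar h0) hidN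
    ((hφP.comp hψ hψI).congr fun y hy => ?_) ?_ ?_ ?_ ?_ fun x hx y hy => f2_eq hφ hΓ hψI hx hy
  · simp [hφψ y hy]
  · simpa only [sub_sub_cancel, Function.comp_def] using (hG.monotoneOn_posVar h0).comp hψ hψI
  · simp [negVar, variationOnFromTo.self, Gtil, hφ0, hΓ0]
  · simp [posVar, variationOnFromTo.self, Gtil, hφ0, hΓ0, hψ0]
  · simp [posVar, negVar, Gtil, hφ1, hΓ1, hψ1]

theorem C1_section (hψφ : ∀ t ∈ 𝕀, ψ (φ t) = t) (hΓle : ∀ t ∈ 𝕀, Γ t ≤ min t (φ t)) {t : ℝ}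
    (ht : t ∈ 𝕀) : C1 ψ Γ t (φ t) = Γ t := by
  have hf : f1 ψ Γ t (φ t) = Γ t := by
    simp only [f1, sV, hψφ t ht, variationOnFromTo.self, Ghat]; ring
  obtain ⟨ht₁, ht₂⟩ := le_min_iff.1 (hΓle t ht)
  rw [C1, hf, min_eq_right ht₂, min_eq_right ht₁]

theorem C2_section (hψφ : ∀ t ∈ 𝕀, ψ (φ t) = t) (hΓle : ∀ t ∈ 𝕀, Γ t ≤ min t (φ t)) {t : ℝ}
    (ht : t ∈ 𝕀) : C2 φ ψ Γ t (φ t) = Γ t := by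
  have hf : f2 φ ψ Γ t (φ t) = Γ t := by
    simp only [f2, sV, hψφ t ht, variationOnFromTo.self, Gtil]; ring
  obtain ⟨ht₁, ht₂⟩ := le_min_iff.1 (hΓle t ht)
  rw [C2, hf, min_eq_right ht₂, min_eq_right ht₁]

theorem IsCopula.le_C1 {C : ℝ → ℝ → ℝ} (hC : IsCopula C) (hsec : ∀ t ∈ 𝕀, C t (φ t) = Γ t)
    (hφs : StrictMonoOn φ 𝕀) (hφI : MapsTo φ 𝕀 𝕀) (hx : x ∈ 𝕀) (hy : y ∈ 𝕀) (hψy : ψ y ∈ 𝕀)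
    (hφψ : φ (ψ y) = y) (hyx : y ≤ φ x) : C x y ≤ C1 ψ Γ x y := by
  refine le_min (hC.le_left hx hy) (le_min (hC.le_right hx hy) ?_)
  have hψx : ψ y ≤ x := by rwa [← hφs.le_iff_le hψy hx, hφψ]
  have hφ := hφs.monotoneOn
  let g t := C x (φ t)
  have hg : MonotoneOn g (𝕀 ∩ Icc (ψ y) x) := fun t ht t' ht' htt' =>
    hC.mono_right hx (hφI ht.1) (hφI ht'.1) (hφ ht.1 ht'.1 htt')
  have hGg : MonotoneOn (Ghat Γ + g) (𝕀 ∩ Icc (ψ y) x) := fun t ht t' ht' htt' => by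
    have := hC.sub_le_add_sub_left ht.1 ht'.1 hx (hφI ht.1) (hφI ht'.1) htt' ht'.2.2
      (hφ ht.1 ht'.1 htt')
    simp only [Pi.add_apply, Ghat, g, ← hsec t ht.1, ← hsec t' ht'.1]
    linarith
  have hV := variationOnFromTo_sub_le hGg hg hψy hx hψx
  simp only [add_sub_cancel_right, Pi.add_apply, g, hφψ, hsec x hx] at hV
  simp only [f1, sV, Ghat] at hV ⊢
  linarith

theorem IsCopula.le_C2 {C : ℝ → ℝ → ℝ} (hC : IsCopula C) (hsec : ∀ t ∈ 𝕀, C t (φ t) = Γ t)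
    (hφs : StrictMonoOn φ 𝕀) (hφI : MapsTo φ 𝕀 𝕀) (hx : x ∈ 𝕀) (hy : y ∈ 𝕀) (hψy : ψ y ∈ 𝕀)
    (hφψ : φ (ψ y) = y) (hxy : φ x ≤ y) : C x y ≤ C2 φ ψ Γ x y := by
  refine le_min (hC.le_left hx hy) (le_min (hC.le_right hx hy) ?_)
  have hxψ : x ≤ ψ y := by rwa [← hφs.le_iff_le hx hψy, hφψ]
  have hφ := hφs.monotoneOn
  let g t := C t y
  have hg : MonotoneOn g (𝕀 ∩ Icc x (ψ y)) := fun t ht t' ht' htt' =>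
    hC.mono_left ht.1 ht'.1 hy htt'
  have hGg : MonotoneOn (Gtil φ Γ + g) (𝕀 ∩ Icc x (ψ y)) := fun t ht t' ht' htt' => by
    have := hC.sub_le_add_sub_right ht.1 ht'.1 (hφI ht.1) (hφI ht'.1) hy htt'
      (hφ ht.1 ht'.1 htt') (hφψ ▸ hφ ht'.1 hψy ht'.2.2)
    simp only [Pi.add_apply, Gtil, g, ← hsec t ht.1, ← hsec t' ht'.1]
    linarith
  have hV := variationOnFromTo_sub_le hGg hg hx hψy hxψ
  have hsecψ := hsec (ψ y) hψy
  rw [hφψ] at hsecψ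
  simp only [add_sub_cancel_right, Pi.add_apply, g, hsecψ] at hV
  simp only [f2, sV, Gtil, hφψ] at hV ⊢
  linarith

end CurvilinearSection

theorem stmt_11_general
    (φ Γ : ℝ → ℝ)
    (hφmono : StrictMonoOn φ (Set.Icc 0 1))
    (hφ0 : φ 0 = 0) (hφ1 : φ 1 = 1)
    (hΓrange : ∀ t ∈ Set.Icc (0:ℝ) 1, max 0 (t + φ t - 1) ≤ Γ t ∧ Γ t ≤ min t (φ t))
    (hΓlip : ∀ t₁ t₂ : ℝ, t₁ ∈ Set.Icc (0:ℝ) 1 → t₂ ∈ Set.Icc (0:ℝ) 1 → t₁ ≤ t₂ →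
      0 ≤ Γ t₂ - Γ t₁ ∧ Γ t₂ - Γ t₁ ≤ (t₂ - t₁) + (φ t₂ - φ t₁))
    (ψ : ℝ → ℝ)
    (hψmem : ∀ y ∈ Set.Icc (0:ℝ) 1, ψ y ∈ Set.Icc (0:ℝ) 1)
    (hψφ : ∀ t ∈ Set.Icc (0:ℝ) 1, ψ (φ t) = t)
    (hφψ : ∀ y ∈ Set.Icc (0:ℝ) 1, φ (ψ y) = y) :
    ∀ x ∈ Set.Icc (0:ℝ) 1, ∀ y ∈ Set.Icc (0:ℝ) 1,
      splice φ ψ Γ x y =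
        sSup {c : ℝ | ∃ C : ℝ → ℝ → ℝ, IsCopula C ∧
          (∀ t ∈ Set.Icc (0:ℝ) 1, C t (φ t) = Γ t) ∧ c = C x y} := by
  have h0 := unitInterval.zero_mem
  have h1 := unitInterval.one_mem
  have hφ := hφmono.monotoneOn
  have hφI : MapsTo φ 𝕀 𝕀 := fun t ht => ⟨hφ0 ▸ hφ h0 ht ht.1, hφ1 ▸ hφ ht h1 ht.2⟩
  have hψ := hφmono.monotoneOn_of_rightInvOn hψmem hφψ
  have hψ0 : ψ 0 = 0 := by simpa [hφ0] using hψφ 0 h0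
  have hψ1 : ψ 1 = 1 := by simpa [hφ1] using hψφ 1 h1
  have hΓ0 : Γ 0 = 0 := by have := hΓrange 0 h0; norm_num [hφ0] at this; linarith
  have hΓ1 : Γ 1 = 1 := by have := hΓrange 1 h1; norm_num [hφ1] at this; linarith
  have hΓ : MonotoneOn Γ 𝕀 := fun a ha b hb hab => by linarith [hΓlip a b ha hb hab]
  have hσ : MonotoneOn (fun t => t + φ t - Γ t) 𝕀 := fun a ha b hb hab => by
    linarith [hΓlip a b ha hb hab]
  have hΓle := fun t ht => (hΓrange t ht).2
  intro x hx y hy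
  by_cases hyx : y ≤ φ x
  · rw [splice, if_pos hyx, eq_comm]
    refine IsGreatest.csSup_eq ⟨⟨C1 ψ Γ, isCopula_C1 hφ hΓ hσ hψ hψmem hφψ hΓ0 hΓ1 hψ0 hψ1,
      fun t ht => C1_section hψφ hΓle ht, rfl⟩, ?_⟩
    rintro _ ⟨C, hC, hsec, rfl⟩
    exact hC.le_C1 hsec hφmono hφI hx hy (hψmem y hy) (hφψ y hy) hyx
  · rw [splice, if_neg hyx, eq_comm]
    refine IsGreatest.csSup_eq ⟨⟨C2 φ ψ Γ, isCopula_C2 hφ hΓ hσ hψ hψmem hφψ hφ0 hφ1 hΓ0 hΓ1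
      hψ0 hψ1, fun t ht => C2_section hψφ hΓle ht, rfl⟩, ?_⟩
    rintro _ ⟨C, hC, hsec, rfl⟩
    exact hC.le_C2 hsec hφmono hφI hx hy (hψmem y hy) (hφψ y hy) (not_le.1 hyx).le

theorem stmt_11
    (φ Γ : ℝ → ℝ)
    (hφcont : ContinuousOn φ (Set.Icc 0 1))
    (hφmono : StrictMonoOn φ (Set.Icc 0 1))
    (hφ0 : φ 0 = 0) (hφ1 : φ 1 = 1)
    (hΓrange : ∀ t ∈ Set.Icc (0:ℝ) 1, max 0 (t + φ t - 1) ≤ Γ t ∧ Γ t ≤ min t (φ t))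
    (hΓlip : ∀ t₁ t₂ : ℝ, t₁ ∈ Set.Icc (0:ℝ) 1 → t₂ ∈ Set.Icc (0:ℝ) 1 → t₁ ≤ t₂ →
      0 ≤ Γ t₂ - Γ t₁ ∧ Γ t₂ - Γ t₁ ≤ (t₂ - t₁) + (φ t₂ - φ t₁))
    (ψ : ℝ → ℝ)
    (hψmem : ∀ y ∈ Set.Icc (0:ℝ) 1, ψ y ∈ Set.Icc (0:ℝ) 1)
    (hψφ : ∀ t ∈ Set.Icc (0:ℝ) 1, ψ (φ t) = t)
    (hφψ : ∀ y ∈ Set.Icc (0:ℝ) 1, φ (ψ y) = y) :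
    ∀ x ∈ Set.Icc (0:ℝ) 1, ∀ y ∈ Set.Icc (0:ℝ) 1,
      splice φ ψ Γ x y =
        sSup {c : ℝ | ∃ C : ℝ → ℝ → ℝ, IsCopula C ∧
          (∀ t ∈ Set.Icc (0:ℝ) 1, C t (φ t) = Γ t) ∧ c = C x y} :=
  stmt_11_general φ Γ hφmono hφ0 hφ1 hΓrange hΓlip ψ hψmem hψφ hφψ
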